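/- Let (X, μ) and (Y, ν) be σ-finite measure spaces, let (ψ_n)_{n∈ℕ} be an orthonormal family in L²(X, μ; ℂ), let (φ_n)_{n∈ℕ} be an orthonormal family in L²(Y, ν; ℂ), let (σ_n)_{n∈ℕ} be a square-summable sequence of nonnegative reals, and let K ∈ L²(X × Y, μ.prod ν; ℂ) be the L²-limit of Σ_{n<N} σ_n · (ψ_n ⊗ φ_n). Then for every m ∈ ℕ, for μ-almost every x ∈ X: ∫_Y K(x, y) · conj(φ_m(y)) dν(y) = σ_m · ψ_m(x). (Duality of eigenfunctions: transmitting the eigenfunction conj(φ_m) through the channel with kernel K yields the dual eigenfunction ψ_m scaled by σ_m, i.e., the pair (φ_m, ψ_m) is a flat-fading sub-channel.) -/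

import Mathlib

open MeasureTheory Filter Finset
open scoped ENNReal ComplexConjugate

lemma key_estimate {X Y : Type*} [MeasurableSpace X] [MeasurableSpace Y]
    (μ : Measure X) (ν : Measure Y) [SigmaFinite ν]
    (h : X × Y → ℂ) (hh : AEStronglyMeasurable h (μ.prod ν))
    (c : Y → ℂ) (hc : AEStronglyMeasurable c ν) :
    eLpNorm (fun x => ∫ y, h (x, y) * c y ∂ν) 2 μ
      ≤ eLpNorm h 2 (μ.prod ν) * eLpNorm c 2 ν := by
  have h2 : ((2 : ℝ≥0∞)).toReal = (2 : ℝ) := by norm_num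
  rw [eLpNorm_eq_lintegral_rpow_enorm_toReal two_ne_zero ENNReal.ofNat_ne_top,
    eLpNorm_eq_lintegral_rpow_enorm_toReal two_ne_zero ENNReal.ofNat_ne_top,
    eLpNorm_eq_lintegral_rpow_enorm_toReal two_ne_zero ENNReal.ofNat_ne_top, h2]
  set B : ℝ≥0∞ := ∫⁻ y, ‖c y‖ₑ ^ (2 : ℝ) ∂ν with hB
  set A : X → ℝ≥0∞ := fun x => ∫⁻ y, ‖h (x, y)‖ₑ ^ (2 : ℝ) ∂ν with hA
  have hpq : Real.HolderConjugate 2 2 := Real.HolderConjugate.two_two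
  have hmeas2 : AEMeasurable (fun z => ‖h z‖ₑ ^ (2 : ℝ)) (μ.prod ν) :=
    hh.enorm.pow_const _
  have hAmeas : AEMeasurable A μ := by
    obtain ⟨G, hGm, hGe⟩ := hmeas2
    refine ⟨fun x => ∫⁻ y, G (x, y) ∂ν, hGm.lintegral_prod_right', ?_⟩
    filter_upwards [Measure.ae_ae_of_ae_prod hGe] with x hx using lintegral_congr_ae hx
  have hpt : ∀ᵐ x ∂μ,
      ‖∫ y, h (x, y) * c y ∂ν‖ₑ ^ (2 : ℝ) ≤ A x * B := by
    filter_upwards [hh.prodMk_left] with x hx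
    have hb : ‖∫ y, h (x, y) * c y ∂ν‖ₑ
        ≤ A x ^ (1 / (2:ℝ)) * B ^ (1 / (2:ℝ)) := by
      calc ‖∫ y, h (x, y) * c y ∂ν‖ₑ
          ≤ ∫⁻ y, ‖h (x, y) * c y‖ₑ ∂ν := enorm_integral_le_lintegral_enorm _
        _ = ∫⁻ y, ((fun y => ‖h (x, y)‖ₑ) * fun y => ‖c y‖ₑ) y ∂ν := by
            simp [enorm_mul]
        _ ≤ A x ^ (1 / (2:ℝ)) * B ^ (1 / (2:ℝ)) :=
            ENNReal.lintegral_mul_le_Lp_mul_Lq ν hpq hx.enorm hc.enorm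
    calc ‖∫ y, h (x, y) * c y ∂ν‖ₑ ^ (2 : ℝ)
        ≤ (A x ^ (1 / (2:ℝ)) * B ^ (1 / (2:ℝ))) ^ (2 : ℝ) :=
          ENNReal.rpow_le_rpow hb (by norm_num)
      _ = A x * B := by
          rw [ENNReal.mul_rpow_of_nonneg _ _ (by norm_num : (0:ℝ) ≤ 2),
            ← ENNReal.rpow_mul, ← ENNReal.rpow_mul]
          norm_num
  calc (∫⁻ x, ‖∫ y, h (x, y) * c y ∂ν‖ₑ ^ (2:ℝ) ∂μ) ^ (1 / (2:ℝ))
      ≤ (∫⁻ x, A x * B ∂μ) ^ (1 / (2:ℝ)) :=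
        ENNReal.rpow_le_rpow (lintegral_mono_ae hpt) (by norm_num)
    _ = ((∫⁻ x, A x ∂μ) * B) ^ (1 / (2:ℝ)) := by
        rw [lintegral_mul_const'' _ hAmeas]
    _ = ((∫⁻ z, ‖h z‖ₑ ^ (2:ℝ) ∂(μ.prod ν)) * B) ^ (1 / (2:ℝ)) := by
        rw [lintegral_prod _ hmeas2]
    _ = (∫⁻ z, ‖h z‖ₑ ^ (2:ℝ) ∂(μ.prod ν)) ^ (1 / (2:ℝ)) * B ^ (1 / (2:ℝ)) := by
        rw [ENNReal.mul_rpow_of_nonneg _ _ (by norm_num : (0:ℝ) ≤ 1/2)]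

/-- **Duality of eigenfunctions**: if `K ∈ L²(X × Y)` is the `L²`-limit of
`∑_{n<N} σₙ • (ψₙ ⊗ φₙ)` with `(ψₙ)`, `(φₙ)` orthonormal families and `σₙ ≥ 0`
square-summable, then transmitting the eigenfunction `conj (φₘ)` through the channel with
kernel `K` yields the dual eigenfunction `ψₘ` scaled by `σₘ`: for every `m`, for μ-a.e. `x`,
`∫ K(x,y) conj(φₘ(y)) dν(y) = σₘ ψₘ(x)`.  The pair `(φₘ, ψₘ)` is a flat-fading sub-channel. -/
theorem eigenfunction_duality
    {X Y : Type*} [MeasurableSpace X] [MeasurableSpace Y]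
    (μ : Measure X) (ν : Measure Y) [SigmaFinite μ] [SigmaFinite ν]
    (σ : ℕ → ℝ) (ψ : ℕ → X → ℂ) (φ : ℕ → Y → ℂ)
    (hσ : ∀ n, 0 ≤ σ n) (hσ2 : Summable (fun n => (σ n) ^ 2))
    (hψ : ∀ n, MemLp (ψ n) 2 μ) (hφ : ∀ n, MemLp (φ n) 2 ν)
    (hψon : ∀ n m, ∫ x, conj (ψ n x) * ψ m x ∂μ = if n = m then 1 else 0)
    (hφon : ∀ n m, ∫ y, conj (φ n y) * φ m y ∂ν = if n = m then 1 else 0)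
    (K : X × Y → ℂ) (hK : MemLp K 2 (μ.prod ν))
    (hKlim : Tendsto
      (fun N => eLpNorm
        (fun z => K z - ∑ n ∈ Finset.range N, (σ n : ℂ) * ψ n z.1 * φ n z.2)
        2 (μ.prod ν)) atTop (nhds 0)) :
    ∀ m, ∀ᵐ x ∂μ, ∫ y, K (x, y) * conj (φ m y) ∂ν = (σ m : ℂ) * ψ m x := by
  intro m
  set c : Y → ℂ := fun y => conj (φ m y) with hc_def
  have hc : AEStronglyMeasurable c ν :=
    Complex.continuous_conj.comp_aestronglyMeasurable (hφ m).1
  have hcnorm : eLpNorm c 2 ν = eLpNorm (φ m) 2 ν := by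
    rw [← eLpNorm_norm c, ← eLpNorm_norm (φ m)]
    congr 1
    funext y
    simp [hc_def]
  have hcmem : MemLp c 2 ν := ⟨hc, by rw [hcnorm]; exact (hφ m).2⟩
  -- integrability of φ n * c
  have hint : ∀ n, Integrable (fun y => φ n y * c y) ν := by
    intro n
    have := (hcmem.smul (hφ n) (hpqr := ⟨by rw [ENNReal.inv_two_add_inv_two, inv_one]⟩) : MemLp (φ n • c) 1 ν)
    rw [← memLp_one_iff_integrable]
    exact this
  have horth : ∀ n, ∫ y, φ n y * c y ∂ν = if m = n then 1 else 0 := by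
    intro n
    rw [← hφon m n]
    exact integral_congr_ae (Eventually.of_forall fun y => mul_comm _ _)
  -- value of the partial-sum integral
  have hKN : ∀ N x, m < N →
      ∫ y, (∑ n ∈ Finset.range N, (σ n : ℂ) * ψ n x * φ n y) * c y ∂ν
        = (σ m : ℂ) * ψ m x := by
    intro N x hmN
    have hrw : (fun y => (∑ n ∈ Finset.range N, (σ n : ℂ) * ψ n x * φ n y) * c y)
        = fun y => ∑ n ∈ Finset.range N, ((σ n : ℂ) * ψ n x) * (φ n y * c y) := by
      funext y
      rw [Finset.sum_mul]
      exact Finset.sum_congr rfl fun n _ => by ring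
    rw [hrw, integral_finset_sum _ (fun n _ => (hint n).const_mul _)]
    simp_rw [integral_const_mul, horth]
    simp [Finset.sum_ite_eq, Finset.mem_range.mpr hmN]
  -- a.e. slices of K are in L²
  have hKm2 : AEMeasurable (fun z => ‖K z‖ₑ ^ (2:ℝ)) (μ.prod ν) :=
    hK.1.enorm.pow_const _
  have hKlint : ∫⁻ z, ‖K z‖ₑ ^ (2:ℝ) ∂(μ.prod ν) < ⊤ := by
    have := lintegral_rpow_enorm_lt_top_of_eLpNorm_lt_top two_ne_zero ENNReal.ofNat_ne_top hK.2
    simpa using this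
  have hslice : ∀ᵐ x ∂μ, MemLp (fun y => K (x, y)) 2 ν := by
    have hAmeas : AEMeasurable (fun x => ∫⁻ y, ‖K (x, y)‖ₑ ^ (2:ℝ) ∂ν) μ := by
      obtain ⟨G, hGm, hGe⟩ := hKm2
      refine ⟨fun x => ∫⁻ y, G (x, y) ∂ν, hGm.lintegral_prod_right', ?_⟩
      filter_upwards [Measure.ae_ae_of_ae_prod hGe] with x hx using lintegral_congr_ae hx
    have h1 : ∀ᵐ x ∂μ, ∫⁻ y, ‖K (x, y)‖ₑ ^ (2:ℝ) ∂ν < ⊤ := by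
      rw [lintegral_prod _ hKm2] at hKlint
      exact ae_lt_top' hAmeas hKlint.ne
    filter_upwards [h1, hK.1.prodMk_left] with x hx1 hx2
    refine ⟨hx2, ?_⟩
    rw [eLpNorm_eq_lintegral_rpow_enorm_toReal two_ne_zero ENNReal.ofNat_ne_top]
    refine ENNReal.rpow_lt_top_of_nonneg (by norm_num) ?_
    simpa using hx1.ne
  have hKint : ∀ᵐ x ∂μ, Integrable (fun y => K (x, y) * c y) ν := by
    filter_upwards [hslice] with x hx
    have := (hcmem.smul hx (hpqr := ⟨by rw [ENNReal.inv_two_add_inv_two, inv_one]⟩) :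
      MemLp ((fun y => K (x, y)) • c) 1 ν)
    rw [← memLp_one_iff_integrable]
    exact this
  set g : X → ℂ := fun x => ∫ y, K (x, y) * c y ∂ν with hg_def
  have gmeas : AEStronglyMeasurable (fun x => g x - (σ m : ℂ) * ψ m x) μ := by
    refine AEStronglyMeasurable.sub ?_ ((hψ m).1.const_mul _)
    exact (hK.1.mul hc.comp_snd).integral_prod_right'
  have hbound : ∀ N, m < N →
      eLpNorm (fun x => g x - (σ m : ℂ) * ψ m x) 2 μ
        ≤ eLpNorm (fun z => K z - ∑ n ∈ Finset.range N, (σ n : ℂ) * ψ n z.1 * φ n z.2)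
            2 (μ.prod ν) * eLpNorm c 2 ν := by
    intro N hmN
    have hcong : (fun x => g x - (σ m : ℂ) * ψ m x) =ᵐ[μ]
        fun x => ∫ y, (K (x, y) - ∑ n ∈ Finset.range N, (σ n : ℂ) * ψ n x * φ n y) * c y ∂ν := by
      filter_upwards [hKint] with x hx
      have hKNint : Integrable
          (fun y => (∑ n ∈ Finset.range N, (σ n : ℂ) * ψ n x * φ n y) * c y) ν := by
        have hrw : (fun y => (∑ n ∈ Finset.range N, (σ n : ℂ) * ψ n x * φ n y) * c y)
            = fun y => ∑ n ∈ Finset.range N, ((σ n : ℂ) * ψ n x) * (φ n y * c y) := by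
          funext y
          rw [Finset.sum_mul]
          exact Finset.sum_congr rfl fun n _ => by ring
        rw [hrw]
        exact integrable_finset_sum _ fun n _ => (hint n).const_mul _
      simp_rw [sub_mul]
      rw [integral_sub hx hKNint, hKN N x hmN]
    rw [eLpNorm_congr_ae hcong]
    have hsm : AEStronglyMeasurable
        (fun z : X × Y => K z - ∑ n ∈ Finset.range N, (σ n : ℂ) * ψ n z.1 * φ n z.2)
        (μ.prod ν) := by
      refine hK.1.sub (Finset.aestronglyMeasurable_fun_sum _ fun n _ => ?_)
      exact (((hψ n).1.comp_fst).const_mul _).mul ((hφ n).1.comp_snd)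
    exact key_estimate μ ν _ hsm c hc
  have hE : eLpNorm (fun x => g x - (σ m : ℂ) * ψ m x) 2 μ = 0 := by
    have htend : Tendsto
        (fun N => eLpNorm (fun z => K z - ∑ n ∈ Finset.range N,
            (σ n : ℂ) * ψ n z.1 * φ n z.2) 2 (μ.prod ν) * eLpNorm c 2 ν)
        atTop (nhds 0) := by
      have := ENNReal.Tendsto.mul_const hKlim (Or.inr hcmem.2.ne)
      simpa using this
    refine le_antisymm ?_ zero_le'
    refine ge_of_tendsto htend ?_
    filter_upwards [eventually_gt_atTop m] with N hN using hbound N hN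
  have hae := (eLpNorm_eq_zero_iff gmeas two_ne_zero).mp hE
  filter_upwards [hae] with x hx
  have hx' : g x - (σ m : ℂ) * ψ m x = 0 := hx
  exact sub_eq_zero.mp hx'
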